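/- arXiv:2205.14948 — 11 statements merged into one kernel-verified Lean document; each statement's English description precedes it below -/
import Mathlib

section
/- Let n ≥ 2 and y₁, …, yₙ : ℂ → ℂ. Assume (i) the (n−1)×(n−1) Casorati determinant of y₁, …, y_{n−1} is nonzero at every point: for all x ∈ ℂ, det (yᵢ(x+j))_{j=0,…,n−2; i=1,…,n−1} ≠ 0; and (ii) the n×n Casorati determinant of y₁, …, yₙ vanishes identically: for all x ∈ ℂ, det (yᵢ(x+j))_{j=0,…,n−1; i=1,…,n} = 0. Then there exist 1-periodic functions c₁, …, c_{n−1} : ℂ → ℂ such that yₙ(x) = c₁(x)·y₁(x) + ⋯ + c_{n−1}(x)·y_{n−1}(x) for all x ∈ ℂ. -/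
/-!
A kernel vector `d` of the full Casorati matrix at `x` has nonzero last entry, since otherwise
its other entries would lie in the kernel of the invertible sub-Casorati matrix. Hence `yₙ` is a
combination of `y₁, …, yₙ₋₁` with constant coefficients on the `n` points `x, …, x + n - 1`.
The coefficients are determined by the first `n - 1` of these points, and equally by the last
`n - 1`, which are the first `n - 1` points for `x + 1`; so they are 1-periodic.
-/

open Matrix

variable {K : Type*} [Field K]

theorem Matrix.exists_submatrix_castSucc_mulVec_eq_col_last {m : ℕ}
    {M : Matrix (Fin (m + 1)) (Fin (m + 1)) K} (hM : M.det = 0)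
    (hminor : (M.submatrix Fin.castSucc Fin.castSucc).det ≠ 0) :
    ∃ e : Fin m → K, M.submatrix id Fin.castSucc *ᵥ e = fun j => M j (Fin.last m) := by
  obtain ⟨d, hd0, hd⟩ := exists_mulVec_eq_zero_iff.2 hM
  have hrow : ∀ j, ∑ i : Fin m, M j i.castSucc * d i.castSucc
      + M j (Fin.last m) * d (Fin.last m) = 0 := fun j => by
    simpa [mulVec, dotProduct, Fin.sum_univ_castSucc] using congrFun hd j
  have hlast : d (Fin.last m) ≠ 0 := by
    intro h0
    refine hminor (exists_mulVec_eq_zero_iff.1 ⟨fun i => d i.castSucc, fun h => hd0 ?_, ?_⟩)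
    · funext i
      induction i using Fin.lastCases with
      | last => exact h0
      | cast i => exact congrFun h i
    · funext j
      simpa [h0, mulVec, dotProduct] using hrow j.castSucc
  refine ⟨fun i => -d i.castSucc / d (Fin.last m), funext fun j => ?_⟩
  simp only [mulVec, dotProduct, submatrix_apply, id, mul_div_assoc', mul_neg, neg_div,
    ← Finset.sum_div, Finset.sum_neg_distrib]
  rw [← neg_div, div_eq_iff hlast]
  linear_combination -hrow j

theorem Matrix.inv_mulVec_eq_of_mulVec_eq {ι : Type*} [Fintype ι] [DecidableEq ι]
    {A : Matrix ι ι K} (hA : A.det ≠ 0) {e b : ι → K} (h : A *ᵥ e = b) : A⁻¹ *ᵥ b = e :=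
  letI := A.invertibleOfIsUnitDet (isUnit_iff_ne_zero.2 hA)
  inv_mulVec_eq_vec h.symm

variable {α : Type*} [AddCommMonoidWithOne α] {m : ℕ}

def casoratiMatrix (f : Fin m → α → K) (x : α) : Matrix (Fin m) (Fin m) K :=
  Matrix.of fun j i => f i (x + j)

theorem exists_casorati_relation_of_det_eq_zero {y : Fin (m + 1) → α → K} {x : α}
    (hfull : (casoratiMatrix y x).det = 0)
    (hsub : (casoratiMatrix (fun i => y i.castSucc) x).det ≠ 0) :
    ∃ e : Fin m → K, ∀ j : Fin (m + 1),
      y (Fin.last m) (x + j) = ∑ i, e i * y i.castSucc (x + j) := by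
  obtain ⟨e, he⟩ := exists_submatrix_castSucc_mulVec_eq_col_last hfull hsub
  refine ⟨e, fun j => ?_⟩
  simpa [casoratiMatrix, mulVec, dotProduct, mul_comm] using (congrFun he j).symm

noncomputable def casoratiCoeff (z : Fin m → α → K) (w : α → K) (x : α) : Fin m → K :=
  (casoratiMatrix z x)⁻¹ *ᵥ fun j => w (x + j)

theorem casoratiCoeff_eq {z : Fin m → α → K} {w : α → K} {x : α} {e : Fin m → K}
    (hz : (casoratiMatrix z x).det ≠ 0) (h : ∀ j : Fin m, w (x + j) = ∑ i, e i * z i (x + j)) :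
    casoratiCoeff z w x = e := by
  refine inv_mulVec_eq_of_mulVec_eq hz (funext fun j => ?_)
  simp [casoratiMatrix, mulVec, dotProduct, h j, mul_comm]

theorem exists_periodic_coeffs_of_casoratian {y : Fin (m + 1) → α → K}
    (hsub : ∀ x, (casoratiMatrix (fun i => y i.castSucc) x).det ≠ 0)
    (hfull : ∀ x, (casoratiMatrix y x).det = 0) :
    ∃ c : Fin m → α → K, (∀ i x, c i (x + 1) = c i x) ∧
      ∀ x, y (Fin.last m) x = ∑ i, c i x * y i.castSucc x := by
  have relation x := exists_casorati_relation_of_det_eq_zero (hfull x) (hsub x)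
  refine ⟨fun i x => casoratiCoeff (fun i => y i.castSucc) (y (Fin.last m)) x i,
    fun i x => ?_, fun x => ?_⟩
  all_goals obtain ⟨e, he⟩ := relation x; dsimp only
  · -- a relation on `x, …, x + m` is one on both windows, starting at `x` and at `x + 1`
    have hshift (j : Fin m) : x + ((j.succ : ℕ) : α) = x + 1 + j := by
      rw [Fin.val_succ, Nat.cast_succ, add_comm (j : α), add_assoc]
    rw [casoratiCoeff_eq (hsub (x + 1)) fun j => hshift j ▸ he j.succ,
      casoratiCoeff_eq (hsub x) fun j => he j.castSucc]
  · rw [casoratiCoeff_eq (hsub x) fun j => he j.castSucc]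
    simpa using he 0

/-- Converse direction of Casorati's theorem on the determinant Θ: if the
(n−1)×(n−1) Casoratian of y₁,…,y_{n−1} is nowhere zero while the full n×n
Casoratian of y₁,…,yₙ vanishes identically, then yₙ is a combination of
y₁,…,y_{n−1} with 1-periodic coefficients. -/
theorem casorati_converse (n : ℕ) (hn : 2 ≤ n) (y : Fin n → ℂ → ℂ)
    (hsub : ∀ x : ℂ, Matrix.det (Matrix.of fun j i : Fin (n - 1) =>
      y (Fin.castLE (Nat.sub_le n 1) i) (x + (j.val : ℂ))) ≠ 0)
    (hfull : ∀ x : ℂ,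
      Matrix.det (Matrix.of fun j i : Fin n => y i (x + (j.val : ℂ))) = 0) :
    ∃ c : Fin (n - 1) → ℂ → ℂ, (∀ i (x : ℂ), c i (x + 1) = c i x) ∧
      ∀ x : ℂ, y ⟨n - 1, by omega⟩ x =
        ∑ i, c i x * y (Fin.castLE (Nat.sub_le n 1) i) x := by
  obtain ⟨m, rfl⟩ : ∃ m, n = m + 1 := ⟨n - 1, by omega⟩
  exact exists_periodic_coeffs_of_casoratian hsub hfull
end

section
/- Let f₀, …, fₙ : ℤ → ℝ, let m₀ ∈ ℤ and p ≥ 0 a natural number. Suppose (i) Δ(m) = 0 for every integer m with m₀ ≤ m ≤ m₀ + p, and (ii) for every such m, at least one of the cofactors C₀(m), …, Cₙ(m) is nonzero. Then there exist real constants A₀, …, Aₙ, not all zero, such that A₀·f₀(m) + A₁·f₁(m) + ⋯ + Aₙ·fₙ(m) = 0 for every integer m with m₀ ≤ m ≤ m₀ + p + n. -/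
/-!
Take `A` to be the cofactor vector `C(m₀)`, the last column of `adjugate M(m₀)`; then
`M(m₀) A = Δ(m₀) e_last = 0`. The relation `M(m) A = 0` propagates from `m` to `m + 1`: the first
`n` rows of `M(m + 1)` are rows of `M(m)`, and since `M(m + 1)` is singular with a nonzero cofactor
in its last row, that row is a linear combination of the first `n`.
-/

open Matrix

namespace Matrix

variable {R ι : Type*} [CommRing R] [Fintype ι] [DecidableEq ι] {n : ℕ}

theorem mulVec_adjugate_col_eq_zero_of_det_eq_zero {M : Matrix ι ι R}
    (hdet : M.det = 0) (j : ι) : M *ᵥ (fun μ => M.adjugate μ j) = 0 := by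
  funext k
  simpa [mul_apply, mulVec, dotProduct, hdet] using congrFun (congrFun (mul_adjugate M) k) j

theorem adjugate_row_vecMul_eq_zero_of_det_eq_zero {M : Matrix ι ι R}
    (hdet : M.det = 0) (μ : ι) : M.adjugate μ ᵥ* M = 0 := by
  funext ν
  simpa [mul_apply, vecMul, dotProduct, hdet] using congrFun (congrFun (adjugate_mul M) μ) ν

/-- The `μ`-th row of `adjugate M` is a left null vector of `M` with nonzero last entry. -/
theorem mulVec_last_eq_zero_of_adjugate_ne_zero [NoZeroDivisors R]
    {M : Matrix (Fin (n + 1)) (Fin (n + 1)) R} (hdet : M.det = 0) {μ : Fin (n + 1)}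
    (hμ : M.adjugate μ (Fin.last n) ≠ 0) {x : Fin (n + 1) → R}
    (hx : ∀ i : Fin n, (M *ᵥ x) i.castSucc = 0) : (M *ᵥ x) (Fin.last n) = 0 := by
  have hpair : M.adjugate μ (Fin.last n) * (M *ᵥ x) (Fin.last n) = 0 :=
    calc M.adjugate μ (Fin.last n) * (M *ᵥ x) (Fin.last n)
        = M.adjugate μ ⬝ᵥ (M *ᵥ x) := by simp [dotProduct, Fin.sum_univ_castSucc, hx]
      _ = (M.adjugate μ ᵥ* M) ⬝ᵥ x := dotProduct_mulVec _ _ _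
      _ = 0 := by rw [adjugate_row_vecMul_eq_zero_of_det_eq_zero hdet, zero_dotProduct]
  exact (mul_eq_zero.1 hpair).resolve_left hμ

end Matrix

section Window

variable {R : Type*} [CommRing R] {n : ℕ}

def windowMatrix (f : Fin (n + 1) → ℤ → R) (m : ℤ) : Matrix (Fin (n + 1)) (Fin (n + 1)) R :=
  of fun i ν => f ν (m + i)

theorem windowMatrix_mulVec_apply (f : Fin (n + 1) → ℤ → R) (m : ℤ) (x : Fin (n + 1) → R)
    (k : Fin (n + 1)) : (windowMatrix f m *ᵥ x) k = ∑ μ, x μ * f μ (m + k) := by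
  simp [windowMatrix, mulVec, dotProduct, mul_comm]

theorem adjugate_windowMatrix_apply_last (f : Fin (n + 1) → ℤ → R) (m : ℤ) (μ : Fin (n + 1)) :
    (windowMatrix f m).adjugate μ (Fin.last n) =
      (-1) ^ (n + μ.val) * det (of fun i j : Fin n => f (μ.succAbove j) (m + i)) := by
  rw [adjugate_fin_succ_eq_det_submatrix, Fin.val_last, Fin.succAbove_last]
  rfl

theorem windowMatrix_succ_mulVec_eq_zero [NoZeroDivisors R] {f : Fin (n + 1) → ℤ → R} {m : ℤ}
    (hdet : (windowMatrix f (m + 1)).det = 0) {μ : Fin (n + 1)}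
    (hμ : (windowMatrix f (m + 1)).adjugate μ (Fin.last n) ≠ 0) {x : Fin (n + 1) → R}
    (hx : windowMatrix f m *ᵥ x = 0) : windowMatrix f (m + 1) *ᵥ x = 0 := by
  have hshift (i : Fin n) : (windowMatrix f (m + 1) *ᵥ x) i.castSucc = 0 :=
    calc (windowMatrix f (m + 1) *ᵥ x) i.castSucc = (windowMatrix f m *ᵥ x) i.succ := by
          simp only [windowMatrix_mulVec_apply, Fin.val_castSucc, Fin.val_succ]
          push_cast
          ring_nf
      _ = 0 := congrFun hx i.succ
  funext k
  induction k using Fin.lastCases with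
  | last => exact mulVec_last_eq_zero_of_adjugate_ne_zero hdet hμ hshift
  | cast i => exact hshift i

end Window

/-- Converse half of Christoffel's criterion: if Δ(m) = 0 for m₀ ≤ m ≤ m₀+p while
at each such m some cofactor C_μ(m) of the last row is nonzero, then the functions
f₀,…,fₙ satisfy a nontrivial linear relation with constant coefficients on the
window {m₀,…,m₀+p+n}. -/
theorem christoffel_converse (n : ℕ) (f : Fin (n + 1) → ℤ → ℝ) (m₀ : ℤ) (p : ℕ)
    (hΔ : ∀ m : ℤ, m₀ ≤ m → m ≤ m₀ + p →
      Matrix.det (Matrix.of fun i ν : Fin (n + 1) => f ν (m + (i.val : ℤ))) = 0)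
    (hC : ∀ m : ℤ, m₀ ≤ m → m ≤ m₀ + p → ∃ μ : Fin (n + 1),
      (-1 : ℝ) ^ (n + μ.val) *
        Matrix.det (Matrix.of fun i j : Fin n =>
          f (μ.succAbove j) (m + (i.val : ℤ))) ≠ 0) :
    ∃ A : Fin (n + 1) → ℝ, A ≠ 0 ∧
      ∀ m : ℤ, m₀ ≤ m → m ≤ m₀ + p + n → ∑ μ, A μ * f μ m = 0 := by
  simp only [← adjugate_windowMatrix_apply_last] at hC
  change ∀ m : ℤ, m₀ ≤ m → m ≤ m₀ + p → (windowMatrix f m).det = 0 at hΔ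
  set A : Fin (n + 1) → ℝ := fun μ => (windowMatrix f m₀).adjugate μ (Fin.last n)
  have hwindow : ∀ q ≤ p, windowMatrix f (m₀ + q) *ᵥ A = 0 := by
    intro q
    induction q with
    | zero => simpa using mulVec_adjugate_col_eq_zero_of_det_eq_zero (hΔ m₀ le_rfl (by omega)) _
    | succ q ih =>
      intro hq
      obtain ⟨μ, hμ⟩ := hC (m₀ + q + 1) (by omega) (by omega)
      push_cast [← add_assoc]
      exact windowMatrix_succ_mulVec_eq_zero (hΔ _ (by omega) (by omega)) hμ (ih (by omega))
  refine ⟨A, fun hA => ?_, fun m hm₀ hm => ?_⟩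
  · obtain ⟨μ, hμ⟩ := hC m₀ le_rfl (by omega)
    exact hμ (congrFun hA μ)
  · obtain ⟨q, k, hq, hk, rfl⟩ : ∃ q k : ℕ, q ≤ p ∧ k < n + 1 ∧ m = m₀ + q + k :=
      ⟨min (m - m₀).toNat p, (m - m₀).toNat - min (m - m₀).toNat p, by omega, by omega, by omega⟩
    simpa [windowMatrix_mulVec_apply] using congrFun (hwindow q hq) ⟨k, hk⟩
end

section
/- Let m ≥ 1, let α₀, …, α_m : ℂ → ℂ and γ : ℂ → ℂ, and define functions β_{m−1}, …, β₀ : ℂ → ℂ by the downward recurrence β_{m−1} := α_m and β_{k−1}(x) := α_k(x) + β_k(x)·γ(x+k) for k = m−1, m−2, …, 1. Then for every function f : ℂ → ℂ and every x ∈ ℂ: Σ_{j=0}^{m} α_j(x)·f(x+j) = Σ_{k=0}^{m−1} β_k(x)·( f(x+k+1) − γ(x+k)·f(x+k) ) + ( α₀(x) + β₀(x)·γ(x) )·f(x). -/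
open Finset

/-- Summation by parts: for `1 ≤ k ≤ n` the recurrence gives `b k * g k = b (k - 1) - a k`, so the
`k`-th term of the quotient sum contributes `a k * F k` plus a telescoping difference. -/
theorem sum_range_mul_eq_of_ruffini_recurrence {R : Type*} [CommRing R] (a b g F : ℕ → R) (n : ℕ)
    (htop : b n = a (n + 1)) (hrec : ∀ k < n, b k = a (k + 1) + b (k + 1) * g (k + 1)) :
    ∑ j ∈ range (n + 2), a j * F j =
      ∑ k ∈ range (n + 1), b k * (F (k + 1) - g k * F k) + (a 0 + b 0 * g 0) * F 0 := by
  have hshift : ∑ k ∈ range n, b (k + 1) * (g (k + 1) * F (k + 1)) =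
      ∑ k ∈ range n, (b k * F (k + 1) - a (k + 1) * F (k + 1)) :=
    sum_congr rfl fun k hk => by rw [hrec k (mem_range.mp hk)]; ring
  rw [sum_sub_distrib] at hshift
  simp only [mul_sub, sum_sub_distrib]
  rw [sum_range_succ' (fun k => b k * (g k * F k)), hshift,
    sum_range_succ (fun k => b k * F (k + 1)), htop, sum_range_succ', sum_range_succ]
  ring

/-- Pincherle's extension of Ruffini's rule: dividing the difference-form
Σ_{j=0}^m α_j θ^j by the first-order form θ − γ, with quotient coefficients β_k
given by the downward recurrence β_{m−1} = α_m, β_{k−1}(x) = α_k(x) + β_k(x)·γ(x+k). -/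
theorem pincherle_ruffini_rule (m : ℕ) (hm : 1 ≤ m) (α β : ℕ → ℂ → ℂ) (γ : ℂ → ℂ)
    (hβtop : β (m - 1) = α m)
    (hβrec : ∀ k : ℕ, 1 ≤ k → k ≤ m - 1 → ∀ x : ℂ,
      β (k - 1) x = α k x + β k x * γ (x + (k : ℂ))) :
    ∀ (f : ℂ → ℂ) (x : ℂ),
      ∑ j ∈ Finset.range (m + 1), α j x * f (x + (j : ℂ)) =
        (∑ k ∈ Finset.range m,
          β k x * (f (x + (k : ℂ) + 1) - γ (x + (k : ℂ)) * f (x + (k : ℂ)))) +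
        (α 0 x + β 0 x * γ x) * f x := by
  obtain ⟨n, rfl⟩ : ∃ n, m = n + 1 := ⟨m - 1, (Nat.succ_pred_eq_of_pos hm).symm⟩
  intro f x
  have key := sum_range_mul_eq_of_ruffini_recurrence (fun j => α j x) (fun k => β k x)
    (fun k => γ (x + k)) (fun k => f (x + k)) n (by simpa using congrFun hβtop x)
    fun k hk => by simpa using hβrec (k + 1) (by omega) (by omega) x
  simpa [add_assoc] using key
end

section
/- Let m ≥ n ≥ 0 be natural numbers, let α₀, …, α_m : ℂ → ℂ and β₀, …, βₙ : ℂ → ℂ, and suppose the leading coefficient satisfies βₙ(x+k) ≠ 0 for every x ∈ ℂ and every k = 0, 1, …, m−n. Then there exist unique functions γ₀, …, γ_{m−n} : ℂ → ℂ such that for every j with n ≤ j ≤ m and every x ∈ ℂ: α_j(x) = Σ_i γ_i(x)·β_{j−i}(x+i), where the sum runs over those indices i with 0 ≤ i ≤ m−n and 0 ≤ j−i ≤ n. (Equivalently: the difference-form Σ_j α_j θ^j minus the composite of the forms Σ_i γ_i θ^i and Σ_k β_k θ^k is a difference-form of order at most n−1.) -/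
/-- Pincherle's division algorithm for linear difference-forms: if the leading
coefficient βₙ of the divisor is nonzero at x, x+1, …, x+(m−n) for every x, then
there are unique quotient coefficients γ₀,…,γ_{m−n} matching the coefficients
α_j of the dividend for n ≤ j ≤ m. -/
theorem pincherle_division (m n : ℕ) (hnm : n ≤ m) (α β : ℕ → ℂ → ℂ)
    (hβ : ∀ x : ℂ, ∀ k : ℕ, k ≤ m - n → β n (x + (k : ℂ)) ≠ 0) :
    ∃! γ : Fin (m - n + 1) → ℂ → ℂ,
      ∀ j : ℕ, n ≤ j → j ≤ m → ∀ x : ℂ,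
        α j x = ∑ i : Fin (m - n + 1),
          if (i : ℕ) ≤ j ∧ j - (i : ℕ) ≤ n then
            γ i x * β (j - (i : ℕ)) (x + ((i : ℕ) : ℂ))
          else 0 := by
  classical
  set N := m - n with hN
  set M : ℂ → Matrix (Fin (N+1)) (Fin (N+1)) ℂ := fun x t i =>
    if (i : ℕ) ≤ n + (t : ℕ) ∧ n + (t : ℕ) - (i : ℕ) ≤ n then
      β (n + (t : ℕ) - (i : ℕ)) (x + ((i : ℕ) : ℂ)) else 0 with hMdef
  set b : ℂ → Fin (N+1) → ℂ := fun x t => α (n + (t : ℕ)) x with hbdef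
  have hdet : ∀ x, IsUnit (M x).det := by
    intro x
    have htri : (M x).BlockTriangular id := by
      intro t i h
      have h' : (i : ℕ) < (t : ℕ) := h
      simp only [hMdef]
      rw [if_neg]
      rintro ⟨h1, h2⟩
      omega
    rw [Matrix.det_of_upperTriangular htri, isUnit_iff_ne_zero, Finset.prod_ne_zero_iff]
    intro t _
    have ht : M x t t = β n (x + ((t : ℕ) : ℂ)) := by
      simp only [hMdef]
      rw [if_pos ⟨by omega, by omega⟩]
      congr 2
      omega
    rw [ht]
    exact hβ x t (by omega)
  -- the key reformulation as a matrix equation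
  have hcore : ∀ γ : Fin (N + 1) → ℂ → ℂ,
      (∀ j : ℕ, n ≤ j → j ≤ m → ∀ x : ℂ,
        α j x = ∑ i : Fin (N + 1),
          if (i : ℕ) ≤ j ∧ j - (i : ℕ) ≤ n then
            γ i x * β (j - (i : ℕ)) (x + ((i : ℕ) : ℂ))
          else 0) ↔ (∀ x, (M x).mulVec (fun i => γ i x) = b x) := by
    intro γ
    constructor
    · intro H x
      funext t
      have h1 : n ≤ n + (t : ℕ) := Nat.le_add_right _ _
      have h2 : n + (t : ℕ) ≤ m := by omega
      have := H (n + (t : ℕ)) h1 h2 x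
      simp only [Matrix.mulVec, dotProduct, hMdef, hbdef]
      rw [this]
      apply Finset.sum_congr rfl
      intro i _
      by_cases hc : (i : ℕ) ≤ n + (t : ℕ) ∧ n + (t : ℕ) - (i : ℕ) ≤ n
      · simp only [if_pos hc, mul_comm]
      · simp only [if_neg hc, zero_mul]
    · intro H j hj1 hj2 x
      have := congrFun (H x) ⟨j - n, by omega⟩
      simp only [Matrix.mulVec, dotProduct, hMdef, hbdef] at this
      have hjeq : n + (j - n) = j := by omega
      rw [hjeq] at this
      rw [← this]
      apply Finset.sum_congr rfl
      intro i _
      by_cases hc : (i : ℕ) ≤ j ∧ j - (i : ℕ) ≤ n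
      · simp only [if_pos hc, mul_comm]
      · simp only [if_neg hc, zero_mul]
  have hsat : ∀ x, (M x).mulVec ((M x)⁻¹.mulVec (b x)) = b x := by
    intro x
    rw [Matrix.mulVec_mulVec, Matrix.mul_nonsing_inv _ (hdet x), Matrix.one_mulVec]
  refine ⟨fun i x => ((M x)⁻¹.mulVec (b x)) i, (hcore _).mpr (fun x => hsat x), ?_⟩
  intro γ hγ
  have H := (hcore γ).mp hγ
  funext i x
  have : (fun i => γ i x) = (M x)⁻¹.mulVec (b x) := by
    rw [← H x, Matrix.mulVec_mulVec, Matrix.nonsing_inv_mul _ (hdet x), Matrix.one_mulVec]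
  exact congrFun this i
end

section
/- Let A : ℂ[X] → (ℂ → ℂ) be a ℂ-linear map (into the ℂ-vector space of functions ℂ → ℂ with pointwise operations) and suppose A satisfies A' = A, i.e., A(X·p)(x) − x·A(p)(x) = A(p)(x) for every polynomial p ∈ ℂ[X] and every x ∈ ℂ. Then A(p)(x) = A(1)(x)·p(x+1) for every p ∈ ℂ[X] and x ∈ ℂ; that is, A is the composition of the shift operator θ with multiplication by the function ε := A(1). -/
/-- Pincherle's characterization of solutions of the symbolic equation A' = A:
a linear operator from polynomials to functions whose functional derivative
A'(p) = A(X·p) − x·A(p) equals A is the composition of the shift θ with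
multiplication by ε = A(1). -/
theorem pincherle_theta_characterization (A : Polynomial ℂ →ₗ[ℂ] (ℂ → ℂ))
    (hA : ∀ (p : Polynomial ℂ) (x : ℂ),
      A (Polynomial.X * p) x - x * A p x = A p x) :
    ∀ (p : Polynomial ℂ) (x : ℂ), A p x = A 1 x * p.eval (x + 1) := by
  have key : ∀ p x, A (Polynomial.X * p) x = (x + 1) * A p x := by
    intro p x
    have := hA p x
    ring_nf
    ring_nf at this
    linear_combination this
  intro p
  induction p using Polynomial.induction_on with
  | C a =>
      intro x
      have : (Polynomial.C a : Polynomial ℂ) = a • 1 := by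
        rw [Polynomial.smul_eq_C_mul, mul_one]
      rw [this, map_smul]
      simp [mul_comm]
  | add p q hp hq =>
      intro x
      have : A (p + q) = A p + A q := map_add A p q
      rw [this]
      simp only [Pi.add_apply, hp x, hq x, Polynomial.eval_add]
      ring
  | monomial n a ih =>
      intro x
      have : Polynomial.C a * Polynomial.X ^ (n + 1)
          = Polynomial.X * (Polynomial.C a * Polynomial.X ^ n) := by ring
      rw [this, key, ih x]
      simp
      ring
end

section
/- Let a : ℂ → ℂ and let A : ℂ[X] → (ℂ → ℂ) be a ℂ-linear map satisfying A(X·p)(x) = a(x)·A(p)(x) for every polynomial p ∈ ℂ[X] and every x ∈ ℂ (i.e., A solves the first-order symbolic equation A' = (a(x) − x)·A). Then A(p)(x) = A(1)(x)·p(a(x)) for every p ∈ ℂ[X] and x ∈ ℂ; that is, A is the composition of the substitution operator S_a : p ↦ (x ↦ p(a(x))) with multiplication by the function A(1). -/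
/-- Pincherle's characterization of solutions of A' = (a(x) − x)·A: a linear
operator satisfying A(X·p)(x) = a(x)·A(p)(x) is the composition of the
substitution operator S_a with multiplication by A(1). -/
theorem pincherle_substitution_characterization (a : ℂ → ℂ)
    (A : Polynomial ℂ →ₗ[ℂ] (ℂ → ℂ))
    (hA : ∀ (p : Polynomial ℂ) (x : ℂ), A (Polynomial.X * p) x = a x * A p x) :
    ∀ (p : Polynomial ℂ) (x : ℂ), A p x = A 1 x * p.eval (a x) := by
  intro p
  induction p using Polynomial.induction_on' with
  | add p q hp hq =>
    intro x
    have := congrFun (A.map_add p q) x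
    simp only [Pi.add_apply] at this
    simp [this, hp x, hq x, Polynomial.eval_add]
    ring
  | monomial n c =>
    intro x
    induction n with
    | zero =>
      have : (Polynomial.monomial 0 c : Polynomial ℂ) = c • 1 := by
        simp [Polynomial.smul_eq_C_mul]
      rw [this, A.map_smul]
      simp [mul_comm]
    | succ n ih =>
      have h1 : (Polynomial.monomial (n+1) c : Polynomial ℂ)
          = Polynomial.X * Polynomial.monomial n c := by
        rw [Polynomial.X_mul_monomial]
      rw [h1, hA, ih]
      simp [Polynomial.eval_monomial, pow_succ]
      ring
end

section
/- Let A : ℂ[X] → (ℂ → ℂ) be a ℂ-linear map and set ξ := A(1). Suppose A satisfies, for all polynomials p, q ∈ ℂ[X] and all x ∈ ℂ, the multiplication law A(p·q)(x) = p(x)·A(q)(x) + q(x)·A(p)(x) − ξ(x)·p(x)·q(x). Then A(p)(x) = (A(X)(x) − x·ξ(x))·p'(x) + ξ(x)·p(x) for every p ∈ ℂ[X] and x ∈ ℂ, where p' denotes the formal derivative of p. -/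
/-- Case α = 0 of the Pincherle–Amaldi classification: a linear operator
satisfying the multiplication law
A(pq) = p·A(q) + q·A(p) − ξ·p·q (with ξ = A(1)) is (ξ₁ − ξx)·D + M_ξ. -/
theorem pincherle_amaldi_alpha_zero (A : Polynomial ℂ →ₗ[ℂ] (ℂ → ℂ))
    (hA : ∀ (p q : Polynomial ℂ) (x : ℂ),
      A (p * q) x = p.eval x * A q x + q.eval x * A p x
        - A 1 x * p.eval x * q.eval x) :
    ∀ (p : Polynomial ℂ) (x : ℂ),
      A p x = (A Polynomial.X x - x * A 1 x) * p.derivative.eval x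
        + A 1 x * p.eval x := by
  intro p
  induction p using Polynomial.induction_on with
  | C a =>
      intro x
      have : (Polynomial.C a : Polynomial ℂ) = a • (1 : Polynomial ℂ) := by
        rw [Polynomial.smul_eq_C_mul, mul_one]
      rw [this, map_smul]
      simp
      ring
  | add p q hp hq =>
      intro x
      rw [map_add]
      simp only [Pi.add_apply, hp x, hq x, Polynomial.derivative_add,
        Polynomial.eval_add]
      ring
  | monomial n a ih =>
      intro x
      have key : (Polynomial.C a * Polynomial.X ^ (n + 1) : Polynomial ℂ)
          = (Polynomial.C a * Polynomial.X ^ n) * Polynomial.X := by ring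
      rw [key, hA, ih x]
      simp only [Polynomial.derivative_mul, Polynomial.derivative_C,
        Polynomial.derivative_X_pow, Polynomial.derivative_X, Polynomial.eval_mul,
        Polynomial.eval_C, Polynomial.eval_pow, Polynomial.eval_X,
        Polynomial.eval_add, Polynomial.eval_one, Polynomial.eval_natCast,
        zero_mul, add_zero, mul_one, zero_add]
      ring
end

section
/- Let A : ℂ[X] → (ℂ → ℂ) be a ℂ-linear map, let α : ℂ → ℂ with α(x) ≠ 0 for all x, and set ξ := A(1). Suppose A satisfies, for all polynomials p, q ∈ ℂ[X] and all x ∈ ℂ, the multiplication law A(p·q)(x) = ξ(x)·(α(x)·ξ(x) − 1)·p(x)·q(x) + (1 − α(x)·ξ(x))·( p(x)·A(q)(x) + q(x)·A(p)(x) ) + α(x)·A(p)(x)·A(q)(x). Define μ : ℂ → ℂ by μ(x) := α(x)·A(X)(x) + (1 − α(x)·ξ(x))·x. Then A(p)(x) = (1/α(x))·p(μ(x)) + (ξ(x) − 1/α(x))·p(x) for every p ∈ ℂ[X] and x ∈ ℂ. -/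
/-- Case α ≠ 0 of the Pincherle–Amaldi classification: a linear operator
satisfying the multiplication law (multiplication2) with α nowhere zero is of
the form (1/α)·S_μ + M_{ξ − 1/α}, with μ(x) = α(x)·A(X)(x) + (1 − α(x)ξ(x))·x. -/
theorem pincherle_amaldi_alpha_ne_zero (A : Polynomial ℂ →ₗ[ℂ] (ℂ → ℂ))
    (α : ℂ → ℂ) (hα : ∀ x : ℂ, α x ≠ 0)
    (hA : ∀ (p q : Polynomial ℂ) (x : ℂ),
      A (p * q) x = A 1 x * (α x * A 1 x - 1) * p.eval x * q.eval x
        + (1 - α x * A 1 x) * (p.eval x * A q x + q.eval x * A p x)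
        + α x * A p x * A q x)
    (μ : ℂ → ℂ)
    (hμ : ∀ x : ℂ, μ x = α x * A Polynomial.X x + (1 - α x * A 1 x) * x) :
    ∀ (p : Polynomial ℂ) (x : ℂ),
      A p x = (1 / α x) * p.eval (μ x) + (A 1 x - 1 / α x) * p.eval x := by
  -- define S p x := α x * A p x + (1 - α x * A 1 x) * p.eval x
  have Smul : ∀ (p q : Polynomial ℂ) (x : ℂ),
      α x * A (p * q) x + (1 - α x * A 1 x) * (p * q).eval x
        = (α x * A p x + (1 - α x * A 1 x) * p.eval x)
          * (α x * A q x + (1 - α x * A 1 x) * q.eval x) := by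
    intro p q x
    rw [hA p q x, Polynomial.eval_mul]
    ring
  have hS : ∀ (p : Polynomial ℂ) (x : ℂ),
      α x * A p x + (1 - α x * A 1 x) * p.eval x = p.eval (μ x) := by
    intro p
    induction p using Polynomial.induction_on with
    | C a =>
      intro x
      have : (Polynomial.C a : Polynomial ℂ) = a • 1 := by
        rw [Polynomial.smul_eq_C_mul, mul_one]
      rw [this, map_smul]
      simp only [Pi.smul_apply, smul_eq_mul, Polynomial.eval_smul,
        Polynomial.eval_one]
      ring
    | add p q hp hq =>
      intro x
      have := hp x
      have := hq x
      simp only [map_add, Pi.add_apply, Polynomial.eval_add] at *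
      linear_combination hp x + hq x
    | monomial n a ih =>
      intro x
      have key := Smul (Polynomial.C a * Polynomial.X ^ n) Polynomial.X x
      have hX : α x * A Polynomial.X x + (1 - α x * A 1 x) * Polynomial.X.eval x
          = μ x := by
        rw [hμ x]; simp
      have h1 : Polynomial.C a * Polynomial.X ^ (n + 1)
          = Polynomial.C a * Polynomial.X ^ n * Polynomial.X := by ring
      rw [h1, key, ih x, hX]
      simp [pow_succ, mul_assoc]
  intro p x
  have h := hS p x
  field_simp [hα x]
  linear_combination h
end

section
/- Let 0 < a < b be real numbers, let n, m be natural numbers, let φ : ℝ → ℂ be n-times continuously differentiable on [a,b] with φ^{(j)}(a) = φ^{(j)}(b) = 0 for every j with 0 ≤ j ≤ n−1, and let a_{λ,r} ∈ ℂ (for 0 ≤ λ ≤ m, 0 ≤ r ≤ n) be constants such that Σ_{r=0}^{n} Σ_{λ=0}^{m} a_{λ,r}·y^λ·φ^{(r)}(y) = 0 for every y ∈ [a,b]. Define f : ℂ → ℂ by f(x) := ∫_a^b φ(y)·y^{x−1} dy, where y^w = exp(w·log y) for y > 0. Then for every x ∈ ℂ: Σ_{r=0}^{n} Σ_{λ=0}^{m}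 (−1)^r·a_{λ,r}·( ∏_{i=1}^{r} (x+λ−i) )·f(x+λ−r) = 0. -/
/-!
Integrating by parts `r` times, with all boundary terms killed by the vanishing of
`φ, φ', …, φ^(n-1)` at `a` and `b`, gives
`∫ φ^(r)(y) y^w dy = (-1)^r w (w-1) ⋯ (w-r+1) ∫ φ(y) y^(w-r) dy`.
Taking `w = x + λ - 1`, the `(r, λ)` term of the difference equation is `a_{λ,r}` times
`∫ y^λ φ^(r)(y) y^(x-1) dy`, so the whole sum is the integral of the differential equation
against `y^(x-1)`, which vanishes.
-/

open Set Topology intervalIntegral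

lemma Complex.exp_mul_ofReal_log {y : ℝ} (hy : 0 < y) (w : ℂ) :
    Complex.exp (w * (Real.log y : ℂ)) = (y : ℂ) ^ w := by
  rw [Complex.cpow_def_of_ne_zero (by exact_mod_cast hy.ne'), Complex.ofReal_log hy.le, mul_comm]

lemma Complex.ofReal_cpow_add_natCast_sub_one {y : ℝ} (hy : 0 < y) (x : ℂ) (l : ℕ) :
    (y : ℂ) ^ (x + l - 1) = (y : ℂ) ^ l * (y : ℂ) ^ (x - 1) := by
  rw [add_sub_right_comm, Complex.cpow_add _ _ (by exact_mod_cast hy.ne'), Complex.cpow_natCast,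
    mul_comm]

lemma hasDerivAt_ofReal_cpow_of_pos {y : ℝ} (hy : 0 < y) (w : ℂ) :
    HasDerivAt (fun t : ℝ => (t : ℂ) ^ w) (w * (y : ℂ) ^ (w - 1)) y := by
  simpa using ((hasDerivAt_id (y : ℂ)).cpow_const (c := w) (by simpa using hy)).comp_ofReal

lemma continuousOn_ofReal_cpow_Ioi (w : ℂ) : ContinuousOn (fun t : ℝ => (t : ℂ) ^ w) (Ioi 0) :=
  fun t ht => (Complex.continuousAt_ofReal_cpow_const t w (Or.inr (ne_of_gt ht))).continuousWithinAt

lemma ContDiffOn.hasDerivAt_iteratedDerivWithin {E : Type*} [NormedAddCommGroup E]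
    [NormedSpace ℝ E] {f : ℝ → E} {s : Set ℝ} {n : ℕ} (hf : ContDiffOn ℝ n f s)
    (hs : UniqueDiffOn ℝ s) {r : ℕ} (hr : r < n) {y : ℝ} (hy : s ∈ 𝓝 y) :
    HasDerivAt (iteratedDerivWithin r f s) (iteratedDerivWithin (r + 1) f s y) y := by
  rw [iteratedDerivWithin_succ]
  exact ((hf.differentiableOn_iteratedDerivWithin (by exact_mod_cast hr) hs) y
    (mem_of_mem_nhds hy)).hasDerivWithinAt.hasDerivAt hy

lemma intervalIntegrable_mul_ofReal_cpow {a b : ℝ} (ha : 0 < a) (hab : a ≤ b) {g : ℝ → ℂ}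
    (hg : ContinuousOn g (Icc a b)) (w : ℂ) :
    IntervalIntegrable (fun y => g y * (y : ℂ) ^ w) MeasureTheory.volume a b :=
  ContinuousOn.intervalIntegrable_of_Icc hab <|
    hg.mul ((continuousOn_ofReal_cpow_Ioi w).mono fun _ hy => ha.trans_le hy.1)

theorem integral_deriv_mul_ofReal_cpow_eq_neg {a b : ℝ} (ha : 0 < a) (hab : a ≤ b) {g g' : ℝ → ℂ}
    (hg : ContinuousOn g (Icc a b)) (hgg' : ∀ y ∈ Ioo a b, HasDerivAt g (g' y) y)
    (hg' : IntervalIntegrable g' MeasureTheory.volume a b) (hga : g a = 0) (hgb : g b = 0) (w : ℂ) :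
    ∫ y in a..b, g' y * (y : ℂ) ^ w = -(w * ∫ y in a..b, g y * (y : ℂ) ^ (w - 1)) := by
  have hpos : Icc a b ⊆ Ioi 0 := fun y hy => ha.trans_le hy.1
  have parts := integral_mul_deriv_eq_deriv_mul_of_hasDerivAt (u := fun y : ℝ => (y : ℂ) ^ w)
    (uIcc_of_le hab ▸ (continuousOn_ofReal_cpow_Ioi w).mono hpos) (uIcc_of_le hab ▸ hg)
    (by rw [min_eq_left hab, max_eq_right hab]
        exact fun y hy => hasDerivAt_ofReal_cpow_of_pos (ha.trans hy.1) w)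
    (by rwa [min_eq_left hab, max_eq_right hab])
    (((continuousOn_ofReal_cpow_Ioi (w - 1)).mono
      (uIcc_of_le hab ▸ hpos)).intervalIntegrable.const_mul w) hg'
  simp only [hga, hgb, mul_zero, sub_zero] at parts
  simp only [mul_comm (g' _), parts, zero_sub, ← integral_const_mul, mul_assoc, mul_comm (g _)]

theorem integral_iteratedDerivWithin_mul_ofReal_cpow {a b : ℝ} (ha : 0 < a) (hab : a < b) {n : ℕ}
    {φ : ℝ → ℂ} (hφ : ContDiffOn ℝ n φ (Icc a b))
    (hbd : ∀ j < n, iteratedDerivWithin j φ (Icc a b) a = 0 ∧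
      iteratedDerivWithin j φ (Icc a b) b = 0) {r : ℕ} (hr : r ≤ n) (w : ℂ) :
    ∫ y in a..b, iteratedDerivWithin r φ (Icc a b) y * (y : ℂ) ^ w =
      (-1) ^ r * (∏ i ∈ Finset.range r, (w - i)) * ∫ y in a..b, φ y * (y : ℂ) ^ (w - r) := by
  induction r generalizing w with
  | zero => simp
  | succ r ih =>
    have hrn : r < n := hr
    have hs := uniqueDiffOn_Icc hab
    rw [integral_deriv_mul_ofReal_cpow_eq_neg ha hab.le
      (hφ.continuousOn_iteratedDerivWithin (by exact_mod_cast hrn.le) hs)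
      (fun y hy => hφ.hasDerivAt_iteratedDerivWithin hs hrn (Icc_mem_nhds hy.1 hy.2))
      ((hφ.continuousOn_iteratedDerivWithin (by exact_mod_cast hr) hs).intervalIntegrable_of_Icc
        hab.le)
      (hbd r hrn).1 (hbd r hrn).2, ih hrn.le, Finset.prod_range_succ']
    have shift : ∀ i : ℕ, w - 1 - i = w - ((i + 1 : ℕ) : ℂ) := fun i => by push_cast; ring
    simp only [shift, Nat.cast_zero, sub_zero]
    ring

theorem integral_sum_pow_mul_iteratedDerivWithin_mul_ofReal_cpow {a b : ℝ} (ha : 0 < a)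
    (hab : a < b) {n : ℕ} {φ : ℝ → ℂ} (hφ : ContDiffOn ℝ n φ (Icc a b))
    (hbd : ∀ j < n, iteratedDerivWithin j φ (Icc a b) a = 0 ∧
      iteratedDerivWithin j φ (Icc a b) b = 0) (m : ℕ) (A : ℕ → ℕ → ℂ) (x : ℂ) :
    ∫ y in a..b, (∑ r ∈ Finset.range (n + 1), ∑ l ∈ Finset.range (m + 1),
        A l r * (y : ℂ) ^ l * iteratedDerivWithin r φ (Icc a b) y) * (y : ℂ) ^ (x - 1) =
      ∑ r ∈ Finset.range (n + 1), ∑ l ∈ Finset.range (m + 1),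
        (-1) ^ r * A l r * (∏ i ∈ Finset.range r, (x + l - ((i : ℂ) + 1))) *
          ∫ y in a..b, φ y * (y : ℂ) ^ (x + l - r - 1) := by
  have hpos : ∀ y ∈ uIcc a b, 0 < y := fun y hy => ha.trans_le (uIcc_of_le hab.le ▸ hy).1
  have hcont (r : ℕ) (hr : r ∈ Finset.range (n + 1)) :
      ContinuousOn (iteratedDerivWithin r φ (Icc a b)) (Icc a b) :=
    hφ.continuousOn_iteratedDerivWithin (by exact_mod_cast Finset.mem_range_succ_iff.mp hr)
      (uniqueDiffOn_Icc hab)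
  have hint (r : ℕ) (hr : r ∈ Finset.range (n + 1)) (l : ℕ) : IntervalIntegrable
      (fun y => A l r * (y : ℂ) ^ l * iteratedDerivWithin r φ (Icc a b) y * (y : ℂ) ^ (x - 1))
      MeasureTheory.volume a b :=
    intervalIntegrable_mul_ofReal_cpow ha hab.le
      ((continuous_const.mul (Complex.continuous_ofReal.pow l)).continuousOn.mul (hcont r hr)) _
  have hterm (r : ℕ) (hr : r ∈ Finset.range (n + 1)) (l : ℕ) :
      ∫ y in a..b, A l r * (y : ℂ) ^ l * iteratedDerivWithin r φ (Icc a b) y * (y : ℂ) ^ (x - 1) =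
        (-1) ^ r * A l r * (∏ i ∈ Finset.range r, (x + l - ((i : ℂ) + 1))) *
          ∫ y in a..b, φ y * (y : ℂ) ^ (x + l - r - 1) := by
    calc
      _ = ∫ y in a..b, A l r * (iteratedDerivWithin r φ (Icc a b) y * (y : ℂ) ^ (x + l - 1)) :=
        integral_congr fun y hy => by
          simp only [Complex.ofReal_cpow_add_natCast_sub_one (hpos y hy)]
          ring
      _ = _ := by
        rw [integral_const_mul, integral_iteratedDerivWithin_mul_ofReal_cpow ha hab hφ hbd
          (Finset.mem_range_succ_iff.mp hr)]
        simp only [sub_sub, add_comm (1 : ℂ)]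
        ring
  simp only [Finset.sum_mul]
  rw [integral_finsetSum fun r hr => by
    simpa only [Finset.sum_fn] using IntervalIntegrable.sum _ fun l _ => hint r hr l]
  refine Finset.sum_congr rfl fun r hr => ?_
  rw [integral_finsetSum fun l _ => hint r hr l]
  exact Finset.sum_congr rfl fun l _ => hterm r hr l

/-- Pincherle's transformation [Pincherle, 1886a]: the Mellin-type transform
f(x) = ∫ φ(y)·y^{x−1} dy carries a solution φ of the differential equation
Σ a_{λ,r}·y^λ·φ^{(r)} = 0 (with vanishing boundary terms) into a solution of the
difference equation Σ (−1)^r a_{λ,r}·(x+λ−1)⋯(x+λ−r)·f(x+λ−r) = 0. -/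
theorem pincherle_mellin_transform (a b : ℝ) (ha : 0 < a) (hab : a < b)
    (n m : ℕ) (φ : ℝ → ℂ)
    (hφ : ContDiffOn ℝ n φ (Set.Icc a b))
    (hbd : ∀ j : ℕ, j < n → iteratedDerivWithin j φ (Set.Icc a b) a = 0 ∧
      iteratedDerivWithin j φ (Set.Icc a b) b = 0)
    (A : ℕ → ℕ → ℂ)
    (hode : ∀ y ∈ Set.Icc a b,
      ∑ r ∈ Finset.range (n + 1), ∑ l ∈ Finset.range (m + 1),
        A l r * (y : ℂ) ^ l * iteratedDerivWithin r φ (Set.Icc a b) y = 0)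
    (f : ℂ → ℂ)
    (hf : ∀ x : ℂ,
      f x = ∫ y in a..b, φ y * Complex.exp ((x - 1) * (Real.log y : ℂ))) :
    ∀ x : ℂ, ∑ r ∈ Finset.range (n + 1), ∑ l ∈ Finset.range (m + 1),
      (-1 : ℂ) ^ r * A l r *
        (∏ i ∈ Finset.range r, (x + (l : ℂ) - ((i : ℂ) + 1))) *
        f (x + (l : ℂ) - (r : ℂ)) = 0 := by
  intro x
  have hf_cpow (z : ℂ) : f z = ∫ y in a..b, φ y * (y : ℂ) ^ (z - 1) :=
    (hf z).trans <| integral_congr fun y hy => by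
      rw [Complex.exp_mul_ofReal_log (ha.trans_le (uIcc_of_le hab.le ▸ hy).1)]
  simp only [hf_cpow, ← integral_sum_pow_mul_iteratedDerivWithin_mul_ofReal_cpow ha hab hφ hbd]
  rw [integral_congr (g := 0) fun y hy => by
    simp only [hode y (uIcc_of_le hab.le ▸ hy), zero_mul, Pi.zero_apply]]
  exact integral_zero
end

section
/- Let n ≥ 1, let r₁, …, rₙ ∈ ℂ be pairwise distinct, let F(z) = ∏_{k=1}^{n} (z − rₖ) with coefficients c₀, …, cₙ (so F(z) = Σ_{j=0}^{n} c_j z^j, cₙ = 1), and let F'(rₖ) = ∏_{j≠k} (rₖ − r_j) denote the (nonzero) derivative of F at rₖ. Let f : ℝ → ℂ be continuous, and define y : ℝ → ℂ by y(x) := Σ_{k=1}^{n} (1/F'(rₖ))·e^{rₖ·x}·∫_0^x e^{−rₖ·t} f(t) dt. Then y is n-times differentiable on ℝ and Σ_{j=0}^{n} c_j·y^{(j)}(x) = f(x) for every x ∈ ℝ, i.e., y solves the differential equation F(D)y = f. -/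
/-!
Write `u_k(x) = e^{r_k x} ∫₀ˣ e^{-r_k t} f(t) dt`, so that `u_k' = r_k u_k + f`, and let
`a_k = 1 / F'(r_k)`. Then `g_i = Σ_k a_k r_k^i u_k` satisfies `g_i' = g_{i+1} + (Σ_k a_k r_k^i) f`,
and by Lagrange interpolation of `X^i` at the roots the moments `Σ_k a_k r_k^i` vanish for
`i < n - 1` and equal `1` for `i = n - 1`. Hence `y^{(i)} = g_i` for `i < n` and
`y^{(n)} = g_n + f`, while `Σ_j c_j g_j = Σ_k a_k F(r_k) u_k = 0`.
-/

open Finset Polynomial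

theorem Lagrange.sum_pow_div_prod_sub {K ι : Type*} [Field K] [DecidableEq ι] {s : Finset ι}
    {v : ι → K} (hvs : Set.InjOn v s) {i : ℕ} (hi : i < #s) :
    ∑ k ∈ s, v k ^ i / ∏ j ∈ s.erase k, (v k - v j) = if i = #s - 1 then 1 else 0 := by
  have hdeg : (X ^ i : K[X]).degree < #s := by
    rw [degree_X_pow]
    exact_mod_cast hi
  simpa [coeff_X_pow, eq_comm] using (Lagrange.coeff_eq_sum hvs hdeg).symm

theorem iteratedDeriv_eq_of_hasDerivAt_succ {𝕜 F : Type*} [NontriviallyNormedField 𝕜]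
    [NormedAddCommGroup F] [NormedSpace 𝕜 F] {g : ℕ → 𝕜 → F} {m : ℕ}
    (hg : ∀ i < m, ∀ x, HasDerivAt (g i) (g (i + 1) x) x) :
    ∀ i ≤ m, iteratedDeriv i (g 0) = g i
  | 0, _ => iteratedDeriv_zero
  | i + 1, hi => by
    rw [iteratedDeriv_succ, iteratedDeriv_eq_of_hasDerivAt_succ hg i (by omega)]
    exact funext fun x => (hg i hi x).deriv

/-- Cauchy's `f / (D - r)`. -/
noncomputable def inverseDSub (r : ℂ) (f : ℝ → ℂ) (x : ℝ) : ℂ :=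
  Complex.exp (r * x) * ∫ t in (0 : ℝ)..x, Complex.exp (-r * t) * f t

theorem hasDerivAt_inverseDSub (r : ℂ) {f : ℝ → ℂ} (hf : Continuous f) (x : ℝ) :
    HasDerivAt (inverseDSub r f) (r * inverseDSub r f x + f x) x := by
  have hexp (s : ℂ) : HasDerivAt (fun t : ℝ => Complex.exp (s * t)) (Complex.exp (s * x) * s) x :=
    ((hasDerivAt_id x).ofReal_comp.const_mul s).cexp.congr_deriv (by simp)
  have hint : HasDerivAt (fun u : ℝ => ∫ t in (0 : ℝ)..u, Complex.exp (-r * t) * f t)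
      (Complex.exp (-r * x) * f x) x :=
    ((by fun_prop : Continuous fun t : ℝ => Complex.exp (-r * t) * f t)
      |>.integral_hasStrictDerivAt 0 x).hasDerivAt
  have hcancel : Complex.exp (r * x) * Complex.exp (-r * x) = 1 := by
    rw [← Complex.exp_add, neg_mul, add_neg_cancel, Complex.exp_zero]
  refine ((hexp r).mul hint).congr_deriv ?_
  rw [inverseDSub]
  linear_combination (f x) * hcancel

theorem hasDerivAt_sum_mul_pow_mul {ι : Type*} (s : Finset ι) (a r : ι → ℂ)
    {u : ι → ℝ → ℂ} {f : ℝ → ℂ} {x : ℝ}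
    (hu : ∀ k ∈ s, HasDerivAt (u k) (r k * u k x + f x) x) (i : ℕ) :
    HasDerivAt (fun x => ∑ k ∈ s, a k * r k ^ i * u k x)
      (∑ k ∈ s, a k * r k ^ (i + 1) * u k x + (∑ k ∈ s, a k * r k ^ i) * f x) x := by
  refine (HasDerivAt.fun_sum fun k hk => (hu k hk).const_mul (a k * r k ^ i)).congr_deriv ?_
  rw [sum_mul, ← sum_add_distrib]
  exact sum_congr rfl fun k _ => by ring

theorem sum_mul_sum_mul_pow_mul_eq_zero {R ι : Type*} [CommRing R] (s : Finset ι) (a r u : ι → R)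
    (c : ℕ → R) (N : ℕ) (hroot : ∀ k ∈ s, ∑ j ∈ range N, c j * r k ^ j = 0) :
    ∑ j ∈ range N, c j * ∑ k ∈ s, a k * r k ^ j * u k = 0 := by
  simp only [mul_sum]
  rw [sum_comm]
  refine sum_eq_zero fun k hk => ?_
  rw [← mul_zero (a k * u k), ← hroot k hk, mul_sum]
  exact sum_congr rfl fun j _ => by ring

/-- Cauchy's representation formula: if the characteristic polynomial
F(z) = ∏ₖ (z − rₖ) = Σⱼ cⱼ zʲ has only simple roots, then
y(x) = Σₖ (1/F'(rₖ))·e^{rₖx}·∫₀ˣ e^{−rₖt} f(t) dt is n-times differentiable and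
solves F(D)y = f. -/
theorem cauchy_representation (n : ℕ) (hn : 1 ≤ n) (r : Fin n → ℂ)
    (hr : Function.Injective r) (c : ℕ → ℂ) (hc : c n = 1)
    (hF : ∀ z : ℂ, ∑ j ∈ Finset.range (n + 1), c j * z ^ j = ∏ k, (z - r k))
    (f : ℝ → ℂ) (hf : Continuous f) (y : ℝ → ℂ)
    (hy : ∀ x : ℝ, y x = ∑ k,
      (1 / ∏ j ∈ Finset.univ.erase k, (r k - r j)) *
        Complex.exp (r k * (x : ℂ)) *
        ∫ t in (0 : ℝ)..x, Complex.exp (-r k * (t : ℂ)) * f t) :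
    (∀ i : ℕ, i < n → Differentiable ℝ (iteratedDeriv i y)) ∧
      ∀ x : ℝ, ∑ j ∈ Finset.range (n + 1), c j * iteratedDeriv j y x = f x := by
  set a : Fin n → ℂ := fun k => 1 / ∏ j ∈ univ.erase k, (r k - r j)
  set g : ℕ → ℝ → ℂ := fun i x => ∑ k, a k * r k ^ i * inverseDSub (r k) f x
  have hg (i : ℕ) (x : ℝ) : HasDerivAt (g i) (g (i + 1) x + (∑ k, a k * r k ^ i) * f x) x :=
    hasDerivAt_sum_mul_pow_mul _ a r (fun k _ => hasDerivAt_inverseDSub (r k) hf x) i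
  have hmoment (i : ℕ) (hi : i < n) : ∑ k, a k * r k ^ i = if i = n - 1 then 1 else 0 := by
    simp only [a, one_div_mul_eq_div]
    simpa using Lagrange.sum_pow_div_prod_sub hr.injOn (s := univ) (by simpa using hi)
  have hy0 : y = g 0 := funext fun x => by simp [hy, g, a, inverseDSub, mul_assoc]
  have hlow : ∀ i ≤ n - 1, iteratedDeriv i y = g i := hy0 ▸
    iteratedDeriv_eq_of_hasDerivAt_succ fun i hi x => by
      simpa [hmoment i (by omega), show i ≠ n - 1 by omega] using hg i x
  refine ⟨fun i hi => hlow i (by omega) ▸ fun x => (hg i x).differentiableAt, fun x => ?_⟩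
  have htop : iteratedDeriv n y x = g n x + f x := by
    obtain ⟨m, rfl⟩ : ∃ m, n = m + 1 := ⟨n - 1, by omega⟩
    rw [iteratedDeriv_succ, hlow m (by omega), (hg m x).deriv, hmoment m (by omega)]
    simp
  have hcombination : ∑ j ∈ range (n + 1), c j * g j x = 0 :=
    sum_mul_sum_mul_pow_mul_eq_zero _ a r _ c _ fun k _ => by
      rw [hF, prod_eq_zero (mem_univ k) (sub_self _)]
  rw [sum_range_succ] at hcombination ⊢
  rw [htop, sum_congr rfl fun j hj => by rw [hlow j (Nat.le_sub_one_of_lt (mem_range.mp hj))]]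
  linear_combination hcombination + f x * hc
end

section
/- Let K ⊆ L be fields of characteristic zero, let d : L → L be a derivation (additive and satisfying the Leibniz rule d(uv) = u·d(v) + d(u)·v) such that d(K) ⊆ K, and let y ∈ L be algebraic over K with [K(y) : K] = n. Then there exist a₀, a₁, …, aₙ ∈ K, not all zero, such that a₀·y + a₁·d(y) + a₂·d²(y) + ⋯ + aₙ·dⁿ(y) = 0; that is, y satisfies a linear homogeneous differential equation of order at most n with coefficients in K. -/
set_option synthInstance.maxHeartbeats 1000000
set_option maxHeartbeats 1000000

/-- Every element algebraic of degree n over a differential subfield (in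
characteristic zero) satisfies a linear homogeneous differential equation of
order at most n with coefficients in the subfield. -/
theorem algebraic_satisfies_linear_ode (L : Type*) [Field L] [CharZero L]
    (K : Subfield L) (d : L → L)
    (hadd : ∀ u v : L, d (u + v) = d u + d v)
    (hleib : ∀ u v : L, d (u * v) = u * d v + d u * v)
    (hK : ∀ a ∈ K, d a ∈ K)
    (y : L) (hy : IsAlgebraic K y) (n : ℕ)
    (hdeg : Module.finrank K (IntermediateField.adjoin K {y}) = n) :
    ∃ a : Fin (n + 1) → L, (∀ i, a i ∈ K) ∧ a ≠ 0 ∧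
      ∑ i : Fin (n + 1), a i * d^[(i : ℕ)] y = 0 := by
  classical
  -- basic facts about d
  have hd0 : d 0 = 0 := by
    have h := hadd 0 0
    rw [add_zero] at h
    exact (left_eq_add.mp h)
  have hd1 : d 1 = 0 := by
    have h := hleib 1 1
    simp only [mul_one, one_mul] at h
    exact (left_eq_add.mp h)
  have hneg : ∀ u : L, d (-u) = -d u := by
    intro u
    have h := hadd u (-u)
    rw [add_neg_cancel, hd0] at h
    linear_combination -h
  have hpow : ∀ (u : L) (m : ℕ), d (u ^ m) = (m : L) * u ^ (m - 1) * d u := by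
    intro u m
    induction m with
    | zero => simpa using hd1
    | succ k ih =>
      rw [pow_succ, hleib, ih]
      cases k with
      | zero => simp
      | succ j =>
        simp only [Nat.succ_sub_one]
        push_cast
        ring
  let D : L →+ L := AddMonoidHom.mk' d hadd
  have hsum : ∀ {ι : Type} (s : Finset ι) (f : ι → L),
      d (∑ i ∈ s, f i) = ∑ i ∈ s, d (f i) := fun s f => map_sum D f s
  set F := IntermediateField.adjoin K {y} with hF
  have hyF : y ∈ F := IntermediateField.mem_adjoin_simple_self K y
  have hKF : ∀ a ∈ K, a ∈ F := by
    intro a ha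
    exact F.algebraMap_mem ⟨a, ha⟩
  have haev : ∀ q : Polynomial K, Polynomial.aeval y q ∈ F := by
    intro q
    apply IntermediateField.algebra_adjoin_le_adjoin K {y}
    rw [Algebra.adjoin_singleton_eq_range_aeval]
    exact ⟨q, rfl⟩
  -- the key step: d y ∈ F
  have hdy : d y ∈ F := by
    set p := minpoly K y with hp
    set P : Polynomial L := p.map (algebraMap K L) with hP
    have hcoeff : ∀ i, P.coeff i ∈ K := by
      intro i
      rw [hP, Polynomial.coeff_map]
      exact (p.coeff i).2
    have hPy : P.eval y = 0 := by
      rw [hP, Polynomial.eval_map, ← Polynomial.aeval_def, minpoly.aeval]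
    have hB : (Polynomial.derivative P).eval y ≠ 0 := by
      rw [hP, Polynomial.derivative_map, Polynomial.eval_map, ← Polynomial.aeval_def]
      exact ((minpoly.irreducible hy.isIntegral).separable).aeval_derivative_ne_zero
        (minpoly.aeval K y)
    have hBF : (Polynomial.derivative P).eval y ∈ F := by
      rw [hP, Polynomial.derivative_map, Polynomial.eval_map, ← Polynomial.aeval_def]
      exact haev _
    have hAF : (∑ i ∈ P.support, d (P.coeff i) * y ^ i) ∈ F :=
      sum_mem fun i _ => mul_mem (hKF _ (hK _ (hcoeff i))) (pow_mem hyF i)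
    have expand : d (P.eval y) =
        (Polynomial.derivative P).eval y * d y + ∑ i ∈ P.support, d (P.coeff i) * y ^ i := by
      rw [Polynomial.eval_eq_sum, Polynomial.derivative_eval]
      unfold Polynomial.sum
      rw [hsum, Finset.sum_mul, ← Finset.sum_add_distrib]
      apply Finset.sum_congr rfl
      intro i _
      rw [hleib, hpow]
      ring
    rw [hPy, hd0] at expand
    have : d y = -(∑ i ∈ P.support, d (P.coeff i) * y ^ i) / (Polynomial.derivative P).eval y := by
      rw [eq_div_iff hB]
      linear_combination -expand
    rw [this]
    exact div_mem (neg_mem hAF) hBF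
  -- F is closed under d
  have hdF : ∀ u ∈ F, d u ∈ F := by
    intro u hu
    induction hu using IntermediateField.adjoin_induction with
    | mem x hx =>
      rcases hx with rfl
      exact hdy
    | algebraMap a => exact hKF _ (hK _ a.2)
    | add x y hx hy ihx ihy => rw [hadd]; exact add_mem ihx ihy
    | mul x y hx hy ihx ihy =>
      rw [hleib]
      exact add_mem (mul_mem hx ihy) (mul_mem ihx hy)
    | inv x hx ihx =>
      rcases eq_or_ne x 0 with rfl | hx0
      · rw [inv_zero, hd0]; exact zero_mem F
      · have h := hleib x x⁻¹
        rw [mul_inv_cancel₀ hx0, hd1] at h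
        have hthis : d x⁻¹ = -(d x * x⁻¹) / x := by
          rw [eq_div_iff hx0]
          linear_combination -h
        rw [hthis]
        exact div_mem (neg_mem (mul_mem ihx (inv_mem hx))) hx
  -- iterates stay in F
  have hiter : ∀ i : ℕ, d^[i] y ∈ F := by
    intro i
    induction i with
    | zero => exact hyF
    | succ k ih =>
      rw [Function.iterate_succ_apply']
      exact hdF _ ih
  -- linear dependence
  have hfd : FiniteDimensional K F := IntermediateField.adjoin.finiteDimensional hy.isIntegral
  set v : Fin (n + 1) → F := fun i => ⟨d^[(i : ℕ)] y, hiter i⟩ with hv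
  have hnli : ¬ LinearIndependent K v := by
    intro h
    have := h.fintype_card_le_finrank
    rw [hdeg, Fintype.card_fin] at this
    omega
  obtain ⟨g, hg, j, hj⟩ := Fintype.not_linearIndependent_iff.mp hnli
  refine ⟨fun i => (g i : L), fun i => (g i).2, ?_, ?_⟩
  · intro h0
    apply hj
    have := congrFun h0 j
    exact Subtype.ext this
  · have hg' : ((∑ i : Fin (n + 1), g i • v i : F) : L) = 0 := by rw [hg]; rfl
    rw [← hg', AddSubmonoidClass.coe_finset_sum]
    apply Finset.sum_congr rfl
    intro i _
    rfl
end
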